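/- arXiv:1912.02320 — 7 statements merged into one kernel-verified Lean document; each statement's English description precedes it below -/
import Mathlib

section
/- Suppose a = 0. If (u, v) is a smooth solution of the Gardner-type system, then for every real ε the scaled pair ũ(t,x) = e^{−ε/p} u(e^{−3ε} t, e^{−ε} x), ṽ(t,x) = e^{−ε/p} v(e^{−3ε} t, e^{−ε} x) is also a solution of the system. (This is the one-parameter group generated by the symmetry X₁ = 3t ∂_t + x ∂_x − (1/p)(u ∂_u + v ∂_v).) -/
/-- Partial derivative with respect to the first variable (time `t`). -/
noncomputable def pderivT (u : ℝ × ℝ → ℝ) : ℝ × ℝ → ℝ :=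
  fun q => deriv (fun s => u (s, q.2)) q.1

/-- Partial derivative with respect to the second variable (space `x`). -/
noncomputable def pderivX (u : ℝ × ℝ → ℝ) : ℝ × ℝ → ℝ :=
  fun q => deriv (fun y => u (q.1, y)) q.2

/-- `(u, v)` is a smooth solution of the Gardner-type system
`u_t + a((u^p + v^p)u)_x + b((uv)^p v)_x + c u_{xxx} = 0`,
`v_t + a((u^p + v^p)v)_x + b((uv)^p u)_x + c v_{xxx} = 0`. -/
def IsGardnerSolution (a b c : ℝ) (p : ℕ) (u v : ℝ × ℝ → ℝ) : Prop :=
  ContDiff ℝ (⊤ : ℕ∞) u ∧ ContDiff ℝ (⊤ : ℕ∞) v ∧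
  (∀ q : ℝ × ℝ,
    pderivT u q
      + pderivX (fun q => a * ((u q) ^ p + (v q) ^ p) * u q
          + b * (u q * v q) ^ p * v q) q
      + c * pderivX (pderivX (pderivX u)) q = 0) ∧
  (∀ q : ℝ × ℝ,
    pderivT v q
      + pderivX (fun q => a * ((u q) ^ p + (v q) ^ p) * v q
          + b * (u q * v q) ^ p * u q) q
      + c * pderivX (pderivX (pderivX v)) q = 0)

lemma pderivX_eq {f : ℝ × ℝ → ℝ} (hf : ContDiff ℝ (⊤ : ℕ∞) f) :
    pderivX f = fun q => fderiv ℝ f q (0, 1) := by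
  funext q
  have h2 : HasDerivAt (fun y : ℝ => ((q.1 : ℝ), y)) ((0 : ℝ), (1 : ℝ)) q.2 :=
    (hasDerivAt_const _ _).prodMk (hasDerivAt_id _)
  have h3 : HasDerivAt (fun y => f (q.1, y)) (fderiv ℝ f (q.1, q.2) (0, 1)) q.2 :=
    ((hf.differentiable (by simp) (q.1, q.2)).hasFDerivAt).comp_hasDerivAt q.2 h2
  simpa [pderivX] using h3.deriv

lemma pderivT_eq {f : ℝ × ℝ → ℝ} (hf : ContDiff ℝ (⊤ : ℕ∞) f) :
    pderivT f = fun q => fderiv ℝ f q (1, 0) := by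
  funext q
  have h2 : HasDerivAt (fun s : ℝ => (s, (q.2 : ℝ))) ((1 : ℝ), (0 : ℝ)) q.1 :=
    (hasDerivAt_id _).prodMk (hasDerivAt_const _ _)
  have h3 : HasDerivAt (fun s => f (s, q.2)) (fderiv ℝ f (q.1, q.2) (1, 0)) q.1 :=
    ((hf.differentiable (by simp) (q.1, q.2)).hasFDerivAt).comp_hasDerivAt q.1 h2
  simpa [pderivT] using h3.deriv

lemma pderivX_smooth {f : ℝ × ℝ → ℝ} (hf : ContDiff ℝ (⊤ : ℕ∞) f) :
    ContDiff ℝ (⊤ : ℕ∞) (pderivX f) := by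
  rw [pderivX_eq hf]
  exact (hf.fderiv_right (by simp)).clm_apply contDiff_const

lemma scale_smooth {f : ℝ × ℝ → ℝ} (hf : ContDiff ℝ (⊤ : ℕ∞) f) (k μ ν : ℝ) :
    ContDiff ℝ (⊤ : ℕ∞) (fun q : ℝ × ℝ => k * f (μ * q.1, ν * q.2)) :=
  contDiff_const.mul (hf.comp ((contDiff_const.mul contDiff_fst).prodMk
    (contDiff_const.mul contDiff_snd)))

lemma scale_pderivX {f : ℝ × ℝ → ℝ} (hf : ContDiff ℝ (⊤ : ℕ∞) f) (k μ ν : ℝ) :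
    pderivX (fun q : ℝ × ℝ => k * f (μ * q.1, ν * q.2)) =
      fun q => k * ν * pderivX f (μ * q.1, ν * q.2) := by
  funext q
  have h1 : HasDerivAt (fun y : ℝ => ν * y) ν q.2 := by
    simpa using (hasDerivAt_id q.2).const_mul ν
  have h2 : HasDerivAt (fun y : ℝ => ((μ * q.1 : ℝ), ν * y)) ((0 : ℝ), ν) q.2 :=
    (hasDerivAt_const _ _).prodMk h1
  have h3 : HasDerivAt (fun y => f (μ * q.1, ν * y))
      (fderiv ℝ f (μ * q.1, ν * q.2) (0, ν)) q.2 :=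
    ((hf.differentiable (by simp) _).hasFDerivAt).comp_hasDerivAt q.2 h2
  have h4 := (h3.const_mul k).deriv
  have h5 : fderiv ℝ f (μ * q.1, ν * q.2) (0, ν)
      = ν * fderiv ℝ f (μ * q.1, ν * q.2) (0, 1) := by
    have h6 : ((0 : ℝ), ν) = ν • ((0 : ℝ), (1 : ℝ)) := by simp
    rw [h6, map_smul]; simp
  rw [pderivX_eq hf]
  show deriv (fun y => k * f (μ * q.1, ν * y)) q.2 = _
  rw [h4, h5]; ring

lemma scale_pderivT {f : ℝ × ℝ → ℝ} (hf : ContDiff ℝ (⊤ : ℕ∞) f) (k μ ν : ℝ) :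
    pderivT (fun q : ℝ × ℝ => k * f (μ * q.1, ν * q.2)) =
      fun q => k * μ * pderivT f (μ * q.1, ν * q.2) := by
  funext q
  have h1 : HasDerivAt (fun s : ℝ => μ * s) μ q.1 := by
    simpa using (hasDerivAt_id q.1).const_mul μ
  have h2 : HasDerivAt (fun s : ℝ => (μ * s, (ν * q.2 : ℝ))) (μ, (0 : ℝ)) q.1 :=
    h1.prodMk (hasDerivAt_const _ _)
  have h3 : HasDerivAt (fun s => f (μ * s, ν * q.2))
      (fderiv ℝ f (μ * q.1, ν * q.2) (μ, 0)) q.1 :=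
    ((hf.differentiable (by simp) _).hasFDerivAt).comp_hasDerivAt q.1 h2
  have h4 := (h3.const_mul k).deriv
  have h5 : fderiv ℝ f (μ * q.1, ν * q.2) (μ, 0)
      = μ * fderiv ℝ f (μ * q.1, ν * q.2) (1, 0) := by
    have h6 : ((μ : ℝ), (0 : ℝ)) = μ • ((1 : ℝ), (0 : ℝ)) := by simp
    rw [h6, map_smul]; simp
  rw [pderivT_eq hf]
  show deriv (fun s => k * f (μ * s, ν * q.2)) q.1 = _
  rw [h4, h5]; ring

/-- Scaling symmetry `X₁` for `a = 0`: if `(u, v)` solves the system, so does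
`(t, x) ↦ (e^{-ε/p} u (e^{-3ε} t, e^{-ε} x), e^{-ε/p} v (e^{-3ε} t, e^{-ε} x))`. -/
theorem stmt_2 (a b c : ℝ) (p : ℕ) (hp : 1 ≤ p) (ha : a = 0) (u v : ℝ × ℝ → ℝ)
    (huv : IsGardnerSolution a b c p u v) (ε : ℝ) :
    IsGardnerSolution a b c p
      (fun q => Real.exp (-(ε / (p : ℝ))) *
        u (Real.exp (-(3 * ε)) * q.1, Real.exp (-ε) * q.2))
      (fun q => Real.exp (-(ε / (p : ℝ))) *
        v (Real.exp (-(3 * ε)) * q.1, Real.exp (-ε) * q.2)) := by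
  subst ha
  obtain ⟨hu, hv, hU, hV⟩ := huv
  set k := Real.exp (-(ε / (p : ℝ))) with hk
  set μ := Real.exp (-(3 * ε)) with hμ
  set ν := Real.exp (-ε) with hν
  have hp0 : (p : ℝ) ≠ 0 := Nat.cast_ne_zero.mpr (by omega)
  -- the two nonlinear flux functions
  set G : ℝ × ℝ → ℝ := fun q => b * (u q * v q) ^ p * v q with hGdef
  set H : ℝ × ℝ → ℝ := fun q => b * (u q * v q) ^ p * u q with hHdef
  have hG : ContDiff ℝ (⊤ : ℕ∞) G :=
    (contDiff_const.mul ((hu.mul hv).pow p)).mul hv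
  have hH : ContDiff ℝ (⊤ : ℕ∞) H :=
    (contDiff_const.mul ((hu.mul hv).pow p)).mul hu
  -- rewrite the hypotheses in terms of G, H
  have hGeq : (fun q => 0 * ((u q) ^ p + (v q) ^ p) * u q
      + b * (u q * v q) ^ p * v q) = G := by
    funext q; simp only [hGdef]; ring
  have hHeq : (fun q => 0 * ((u q) ^ p + (v q) ^ p) * v q
      + b * (u q * v q) ^ p * u q) = H := by
    funext q; simp only [hHdef]; ring
  rw [hGeq] at hU
  rw [hHeq] at hV
  -- scaling constants agree
  have hkν : k * ν * ν * ν = k * μ := by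
    rw [hk, hμ, hν]
    simp only [← Real.exp_add]
    congr 1; ring
  have hkp : k ^ (2 * p + 1) * ν = k * μ := by
    rw [hk, hμ, hν]
    simp only [← Real.exp_nat_mul, ← Real.exp_add]
    congr 1
    push_cast
    field_simp
    ring
  -- derivative computations
  have dU1 := scale_pderivX hu k μ ν
  have dU2 := scale_pderivX (pderivX_smooth hu) (k * ν) μ ν
  have dU3 := scale_pderivX (pderivX_smooth (pderivX_smooth hu)) (k * ν * ν) μ ν
  have dV1 := scale_pderivX hv k μ ν
  have dV2 := scale_pderivX (pderivX_smooth hv) (k * ν) μ ν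
  have dV3 := scale_pderivX (pderivX_smooth (pderivX_smooth hv)) (k * ν * ν) μ ν
  have eG : (fun q : ℝ × ℝ =>
      0 * ((k * u (μ * q.1, ν * q.2)) ^ p + (k * v (μ * q.1, ν * q.2)) ^ p)
          * (k * u (μ * q.1, ν * q.2))
        + b * (k * u (μ * q.1, ν * q.2) * (k * v (μ * q.1, ν * q.2))) ^ p
          * (k * v (μ * q.1, ν * q.2)))
      = fun q : ℝ × ℝ => k ^ (2 * p + 1) * G (μ * q.1, ν * q.2) := by
    funext q; simp only [hGdef]; ring
  have eH : (fun q : ℝ × ℝ =>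
      0 * ((k * u (μ * q.1, ν * q.2)) ^ p + (k * v (μ * q.1, ν * q.2)) ^ p)
          * (k * v (μ * q.1, ν * q.2))
        + b * (k * u (μ * q.1, ν * q.2) * (k * v (μ * q.1, ν * q.2))) ^ p
          * (k * u (μ * q.1, ν * q.2)))
      = fun q : ℝ × ℝ => k ^ (2 * p + 1) * H (μ * q.1, ν * q.2) := by
    funext q; simp only [hHdef]; ring
  refine ⟨scale_smooth hu k μ ν, scale_smooth hv k μ ν, ?_, ?_⟩
  · intro q
    simp only [scale_pderivT hu k μ ν, eG, scale_pderivX hG (k ^ (2 * p + 1)) μ ν,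
      dU1, dU2, dU3]
    linear_combination (k * μ) * hU (μ * q.1, ν * q.2)
      + pderivX G (μ * q.1, ν * q.2) * hkp
      + (c * pderivX (pderivX (pderivX u)) (μ * q.1, ν * q.2)) * hkν
  · intro q
    simp only [scale_pderivT hv k μ ν, eH, scale_pderivX hH (k ^ (2 * p + 1)) μ ν,
      dV1, dV2, dV3]
    linear_combination (k * μ) * hV (μ * q.1, ν * q.2)
      + pderivX H (μ * q.1, ν * q.2) * hkp
      + (c * pderivX (pderivX (pderivX v)) (μ * q.1, ν * q.2)) * hkν
end

section
/- Suppose b = 0. If (u, v) is a smooth solution of the Gardner-type system, then for every real ε the scaled pair ũ(t,x) = e^{−2ε/p} u(e^{−3ε} t, e^{−ε} x), ṽ(t,x) = e^{−2ε/p} v(e^{−3ε} t, e^{−ε} x) is also a solution of the system. (This is the one-parameter group generated by the symmetry Y₁ = 3t ∂_t + x ∂_x − (2/p)(u ∂_u + v ∂_v).) -/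
lemma pderivX_eq_fderiv (f : ℝ × ℝ → ℝ) (hf : Differentiable ℝ f) (q : ℝ × ℝ) :
    pderivX f q = fderiv ℝ f q ((0 : ℝ), (1 : ℝ)) := by
  have h1 : HasDerivAt (fun y : ℝ => ((q.1 : ℝ), y)) ((0 : ℝ), (1 : ℝ)) q.2 :=
    (hasDerivAt_const q.2 q.1).prodMk (hasDerivAt_id q.2)
  have h2 : HasFDerivAt f (fderiv ℝ f q) (q.1, q.2) := by
    rw [Prod.mk.eta]; exact (hf q).hasFDerivAt
  exact (h2.comp_hasDerivAt q.2 h1).deriv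

lemma contDiff_pderivX (f : ℝ × ℝ → ℝ) (hf : ContDiff ℝ (⊤ : ℕ∞) f) :
    ContDiff ℝ (⊤ : ℕ∞) (pderivX f) := by
  have : pderivX f = fun q => fderiv ℝ f q ((0:ℝ), (1:ℝ)) := by
    funext q; exact pderivX_eq_fderiv f (hf.differentiable (by simp)) q
  rw [this]
  exact (hf.fderiv_right (by simp)).clm_apply contDiff_const

lemma contDiff_scale (f : ℝ × ℝ → ℝ) (hf : ContDiff ℝ (⊤ : ℕ∞) f) (k α β : ℝ) :
    ContDiff ℝ (⊤ : ℕ∞) (fun q : ℝ × ℝ => k * f (α * q.1, β * q.2)) := by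
  have hL : ContDiff ℝ (⊤ : ℕ∞) (fun q : ℝ × ℝ => ((α * q.1 : ℝ), (β * q.2 : ℝ))) :=
    (contDiff_const.mul contDiff_fst).prodMk (contDiff_const.mul contDiff_snd)
  exact contDiff_const.mul (hf.comp hL)

lemma pderivX_scale (f : ℝ × ℝ → ℝ) (hf : ContDiff ℝ (⊤ : ℕ∞) f) (k α β : ℝ) :
    pderivX (fun q : ℝ × ℝ => k * f (α * q.1, β * q.2))
      = fun q : ℝ × ℝ => (k * β) * pderivX f (α * q.1, β * q.2) := by
  funext q
  have hd : Differentiable ℝ (fun z : ℝ => f (α * q.1, z)) :=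
    (hf.differentiable (by simp)).comp ((differentiable_const _).prodMk differentiable_id)
  have hg : ∀ y : ℝ, HasDerivAt (fun y : ℝ => f (α * q.1, y))
      (pderivX f (α * q.1, y)) y := fun y => by
    simpa [pderivX] using (hd y).hasDerivAt
  have hβ : HasDerivAt (fun y : ℝ => β * y) β q.2 := by
    simpa using (hasDerivAt_id q.2).const_mul β
  have h4 : HasDerivAt (fun y : ℝ => f (α * q.1, β * y))
      (pderivX f (α * q.1, β * q.2) * β) q.2 := (hg (β * q.2)).comp q.2 hβ
  have h5 := (h4.const_mul k).deriv
  show deriv (fun y => k * f (α * q.1, β * y)) q.2 = _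
  rw [h5]; ring

lemma pderivT_scale (f : ℝ × ℝ → ℝ) (hf : ContDiff ℝ (⊤ : ℕ∞) f) (k α β : ℝ) :
    pderivT (fun q : ℝ × ℝ => k * f (α * q.1, β * q.2))
      = fun q : ℝ × ℝ => (k * α) * pderivT f (α * q.1, β * q.2) := by
  funext q
  have hd : Differentiable ℝ (fun z : ℝ => f (z, β * q.2)) :=
    (hf.differentiable (by simp)).comp (differentiable_id.prodMk (differentiable_const _))
  have hg : ∀ s : ℝ, HasDerivAt (fun s : ℝ => f (s, β * q.2))
      (pderivT f (s, β * q.2)) s := fun s => by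
    simpa [pderivT] using (hd s).hasDerivAt
  have hα : HasDerivAt (fun s : ℝ => α * s) α q.1 := by
    simpa using (hasDerivAt_id q.1).const_mul α
  have h4 : HasDerivAt (fun s : ℝ => f (α * s, β * q.2))
      (pderivT f (α * q.1, β * q.2) * α) q.1 := (hg (α * q.1)).comp q.1 hα
  have h5 := (h4.const_mul k).deriv
  show deriv (fun s => k * f (α * s, β * q.2)) q.1 = _
  rw [h5]; ring

lemma gardner_scale_eq (a c : ℝ) (p : ℕ) (u v : ℝ × ℝ → ℝ)
    (hu : ContDiff ℝ (⊤ : ℕ∞) u) (hv : ContDiff ℝ (⊤ : ℕ∞) v)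
    (heq : ∀ q : ℝ × ℝ, pderivT u q
      + pderivX (fun q => a * ((u q) ^ p + (v q) ^ p) * u q
          + 0 * (u q * v q) ^ p * v q) q
      + c * pderivX (pderivX (pderivX u)) q = 0)
    (K A B : ℝ) (hC1 : K ^ (p + 1) * B = K * A) (hC3 : K * B * B * B = K * A)
    (q : ℝ × ℝ) :
    pderivT (fun q => K * u (A * q.1, B * q.2)) q
      + pderivX (fun q =>
          a * ((K * u (A * q.1, B * q.2)) ^ p + (K * v (A * q.1, B * q.2)) ^ p)
              * (K * u (A * q.1, B * q.2))
          + 0 * (K * u (A * q.1, B * q.2) * (K * v (A * q.1, B * q.2))) ^ p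
              * (K * v (A * q.1, B * q.2))) q
      + c * pderivX (pderivX (pderivX (fun q => K * u (A * q.1, B * q.2)))) q = 0 := by
  have hFc : ContDiff ℝ (⊤ : ℕ∞) (fun q : ℝ × ℝ =>
      a * ((u q) ^ p + (v q) ^ p) * u q + 0 * (u q * v q) ^ p * v q) :=
    ((contDiff_const.mul ((hu.pow p).add (hv.pow p))).mul hu).add
      ((contDiff_const.mul ((hu.mul hv).pow p)).mul hv)
  have hN : (fun q : ℝ × ℝ =>
      a * ((K * u (A * q.1, B * q.2)) ^ p + (K * v (A * q.1, B * q.2)) ^ p)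
          * (K * u (A * q.1, B * q.2))
        + 0 * (K * u (A * q.1, B * q.2) * (K * v (A * q.1, B * q.2))) ^ p
          * (K * v (A * q.1, B * q.2)))
      = fun q : ℝ × ℝ => K ^ (p + 1) *
          (a * ((u (A * q.1, B * q.2)) ^ p + (v (A * q.1, B * q.2)) ^ p)
              * u (A * q.1, B * q.2)
            + 0 * (u (A * q.1, B * q.2) * v (A * q.1, B * q.2)) ^ p
              * v (A * q.1, B * q.2)) := by
    funext r; ring
  have e1 : pderivT (fun q => K * u (A * q.1, B * q.2)) q
      = (K * A) * pderivT u (A * q.1, B * q.2) :=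
    congrFun (pderivT_scale u hu K A B) q
  have e2 : pderivX (fun q : ℝ × ℝ =>
      a * ((K * u (A * q.1, B * q.2)) ^ p + (K * v (A * q.1, B * q.2)) ^ p)
          * (K * u (A * q.1, B * q.2))
        + 0 * (K * u (A * q.1, B * q.2) * (K * v (A * q.1, B * q.2))) ^ p
          * (K * v (A * q.1, B * q.2))) q
      = (K ^ (p + 1) * B) * pderivX (fun q : ℝ × ℝ =>
          a * ((u q) ^ p + (v q) ^ p) * u q + 0 * (u q * v q) ^ p * v q)
          (A * q.1, B * q.2) := by
    rw [hN]
    exact congrFun (pderivX_scale _ hFc (K ^ (p + 1)) A B) q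
  have e3 : pderivX (pderivX (pderivX (fun q => K * u (A * q.1, B * q.2)))) q
      = (K * B * B * B) * pderivX (pderivX (pderivX u)) (A * q.1, B * q.2) := by
    rw [pderivX_scale u hu K A B,
        pderivX_scale (pderivX u) (contDiff_pderivX u hu) (K * B) A B]
    exact congrFun (pderivX_scale (pderivX (pderivX u))
      (contDiff_pderivX _ (contDiff_pderivX u hu)) (K * B * B) A B) q
  rw [e1, e2, e3, hC1, hC3]
  linear_combination (K * A) * heq (A * q.1, B * q.2)

/-- Scaling symmetry `Y₁` for `b = 0`: if `(u, v)` solves the system, so does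
`(t, x) ↦ (e^{-2ε/p} u (e^{-3ε} t, e^{-ε} x), e^{-2ε/p} v (e^{-3ε} t, e^{-ε} x))`. -/
theorem stmt_3 (a b c : ℝ) (p : ℕ) (hp : 1 ≤ p) (hb : b = 0) (u v : ℝ × ℝ → ℝ)
    (huv : IsGardnerSolution a b c p u v) (ε : ℝ) :
    IsGardnerSolution a b c p
      (fun q => Real.exp (-(2 * ε / (p : ℝ))) *
        u (Real.exp (-(3 * ε)) * q.1, Real.exp (-ε) * q.2))
      (fun q => Real.exp (-(2 * ε / (p : ℝ))) *
        v (Real.exp (-(3 * ε)) * q.1, Real.exp (-ε) * q.2)) := by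
  subst hb
  obtain ⟨hu, hv, h1, h2⟩ := huv
  have hp0 : (p : ℝ) ≠ 0 := Nat.cast_ne_zero.mpr (by omega)
  have hKp : Real.exp (-(2 * ε / (p : ℝ))) ^ p = Real.exp (-(2 * ε)) := by
    rw [← Real.exp_nat_mul]; congr 1; field_simp
  have hC1 : Real.exp (-(2 * ε / (p : ℝ))) ^ (p + 1) * Real.exp (-ε)
      = Real.exp (-(2 * ε / (p : ℝ))) * Real.exp (-(3 * ε)) := by
    rw [pow_succ, hKp, ← Real.exp_add, ← Real.exp_add, ← Real.exp_add]
    congr 1; ring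
  have hC3 : Real.exp (-(2 * ε / (p : ℝ))) * Real.exp (-ε) * Real.exp (-ε)
        * Real.exp (-ε)
      = Real.exp (-(2 * ε / (p : ℝ))) * Real.exp (-(3 * ε)) := by
    rw [← Real.exp_add, ← Real.exp_add, ← Real.exp_add, ← Real.exp_add]
    congr 1; ring
  have h2' : ∀ q : ℝ × ℝ, pderivT v q
      + pderivX (fun q => a * ((v q) ^ p + (u q) ^ p) * v q
          + 0 * (v q * u q) ^ p * u q) q
      + c * pderivX (pderivX (pderivX v)) q = 0 := by
    intro q
    have hfun : (fun q : ℝ × ℝ => a * ((v q) ^ p + (u q) ^ p) * v q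
          + 0 * (v q * u q) ^ p * u q)
        = fun q : ℝ × ℝ => a * ((u q) ^ p + (v q) ^ p) * v q
          + 0 * (u q * v q) ^ p * u q := by
      funext r; ring
    rw [hfun]; exact h2 q
  refine ⟨contDiff_scale u hu _ _ _, contDiff_scale v hv _ _ _, fun q => ?_, fun q => ?_⟩
  · exact gardner_scale_eq a c p u v hu hv h1 _ _ _ hC1 hC3 q
  · have hfun : (fun q : ℝ × ℝ =>
        a * ((Real.exp (-(2 * ε / (p : ℝ))) *
              u (Real.exp (-(3 * ε)) * q.1, Real.exp (-ε) * q.2)) ^ p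
            + (Real.exp (-(2 * ε / (p : ℝ))) *
              v (Real.exp (-(3 * ε)) * q.1, Real.exp (-ε) * q.2)) ^ p)
          * (Real.exp (-(2 * ε / (p : ℝ))) *
              v (Real.exp (-(3 * ε)) * q.1, Real.exp (-ε) * q.2))
        + 0 * (Real.exp (-(2 * ε / (p : ℝ))) *
              u (Real.exp (-(3 * ε)) * q.1, Real.exp (-ε) * q.2)
            * (Real.exp (-(2 * ε / (p : ℝ))) *
              v (Real.exp (-(3 * ε)) * q.1, Real.exp (-ε) * q.2))) ^ p
          * (Real.exp (-(2 * ε / (p : ℝ))) *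
              u (Real.exp (-(3 * ε)) * q.1, Real.exp (-ε) * q.2)))
        = fun q : ℝ × ℝ =>
        a * ((Real.exp (-(2 * ε / (p : ℝ))) *
              v (Real.exp (-(3 * ε)) * q.1, Real.exp (-ε) * q.2)) ^ p
            + (Real.exp (-(2 * ε / (p : ℝ))) *
              u (Real.exp (-(3 * ε)) * q.1, Real.exp (-ε) * q.2)) ^ p)
          * (Real.exp (-(2 * ε / (p : ℝ))) *
              v (Real.exp (-(3 * ε)) * q.1, Real.exp (-ε) * q.2))
        + 0 * (Real.exp (-(2 * ε / (p : ℝ))) *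
              v (Real.exp (-(3 * ε)) * q.1, Real.exp (-ε) * q.2)
            * (Real.exp (-(2 * ε / (p : ℝ))) *
              u (Real.exp (-(3 * ε)) * q.1, Real.exp (-ε) * q.2))) ^ p
          * (Real.exp (-(2 * ε / (p : ℝ))) *
              u (Real.exp (-(3 * ε)) * q.1, Real.exp (-ε) * q.2)) := by
      funext r; ring
    rw [hfun]
    exact gardner_scale_eq a c p v u hv hu h2' _ _ _ hC1 hC3 q
end

section
/- Suppose b = 0 and p = 1, so the system reads u_t + a((u+v)u)_x + c u_{xxx} = 0, v_t + a((u+v)v)_x + c v_{xxx} = 0. If (u, v) is a smooth solution, then for every real ε the pair ũ = e^{ε} u, ṽ = v + (1 − e^{ε}) u is also a solution. (This is the one-parameter group generated by the symmetry X₅ = u(∂_u − ∂_v).) -/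
lemma pderivX_eq_fderiv_s5 (w : ℝ × ℝ → ℝ) (hw : ContDiff ℝ (⊤ : ℕ∞) w) :
    pderivX w = fun q => fderiv ℝ w q (0, 1) := by
  funext q
  have h1 : HasFDerivAt (fun y : ℝ => (q.1, y))
      ((0 : ℝ →L[ℝ] ℝ).prod (ContinuousLinearMap.id ℝ ℝ)) q.2 :=
    HasFDerivAt.prodMk (hasFDerivAt_const q.1 q.2) (hasFDerivAt_id q.2)
  have h2 := ((hw.differentiable (by simp) q).hasFDerivAt.comp q.2 h1)
  simpa [pderivX, Function.comp_def] using h2.hasDerivAt.deriv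

lemma contDiff_pderivX_s5 (w : ℝ × ℝ → ℝ) (hw : ContDiff ℝ (⊤ : ℕ∞) w) :
    ContDiff ℝ (⊤ : ℕ∞) (pderivX w) := by
  rw [pderivX_eq_fderiv_s5 w hw]
  exact (hw.fderiv_right (by simp)).clm_apply contDiff_const

lemma sliceX_diff (w : ℝ × ℝ → ℝ) (hw : ContDiff ℝ (⊤ : ℕ∞) w) (q : ℝ × ℝ) :
    DifferentiableAt ℝ (fun y => w (q.1, y)) q.2 := by
  have : ContDiff ℝ (⊤ : ℕ∞) (fun y : ℝ => w (q.1, y)) :=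
    hw.comp (contDiff_const.prodMk contDiff_id)
  exact (this.differentiable (by simp)).differentiableAt

lemma sliceT_diff (w : ℝ × ℝ → ℝ) (hw : ContDiff ℝ (⊤ : ℕ∞) w) (q : ℝ × ℝ) :
    DifferentiableAt ℝ (fun s => w (s, q.2)) q.1 := by
  have : ContDiff ℝ (⊤ : ℕ∞) (fun s : ℝ => w (s, q.2)) :=
    hw.comp (contDiff_id.prodMk contDiff_const)
  exact (this.differentiable (by simp)).differentiableAt

lemma pderivX_const_mul (w : ℝ × ℝ → ℝ) (k : ℝ) :
    pderivX (fun q => k * w q) = fun q => k * pderivX w q := by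
  funext q
  exact deriv_const_mul_field k

lemma pderivT_const_mul (w : ℝ × ℝ → ℝ) (k : ℝ) :
    pderivT (fun q => k * w q) = fun q => k * pderivT w q := by
  funext q
  exact deriv_const_mul_field k

lemma pderivX_add (f g : ℝ × ℝ → ℝ) (hf : ContDiff ℝ (⊤ : ℕ∞) f) (hg : ContDiff ℝ (⊤ : ℕ∞) g) :
    pderivX (fun q => f q + g q) = fun q => pderivX f q + pderivX g q := by
  funext q
  exact deriv_add (sliceX_diff f hf q) (sliceX_diff g hg q)

lemma pderivT_add (f g : ℝ × ℝ → ℝ) (hf : ContDiff ℝ (⊤ : ℕ∞) f) (hg : ContDiff ℝ (⊤ : ℕ∞) g) :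
    pderivT (fun q => f q + g q) = fun q => pderivT f q + pderivT g q := by
  funext q
  exact deriv_add (sliceT_diff f hf q) (sliceT_diff g hg q)

lemma pderivX_add_smul (f g : ℝ × ℝ → ℝ) (hf : ContDiff ℝ (⊤ : ℕ∞) f) (hg : ContDiff ℝ (⊤ : ℕ∞) g)
    (k : ℝ) :
    pderivX (fun q => f q + k * g q) = fun q => pderivX f q + k * pderivX g q := by
  rw [pderivX_add f (fun q => k * g q) hf (contDiff_const.mul hg), pderivX_const_mul]

/-- Symmetry `X₅ = u(∂_u - ∂_v)` for `b = 0`, `p = 1`: if `(u, v)` solves the system,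
so does `(e^{ε} u, v + (1 - e^{ε}) u)`. -/
theorem stmt_5 (a b c : ℝ) (p : ℕ) (hb : b = 0) (hp : p = 1) (u v : ℝ × ℝ → ℝ)
    (huv : IsGardnerSolution a b c p u v) (ε : ℝ) :
    IsGardnerSolution a b c p
      (fun q => Real.exp ε * u q)
      (fun q => v q + (1 - Real.exp ε) * u q) := by
  subst hb hp
  obtain ⟨hu, hv, equ, eqv⟩ := huv
  set k := Real.exp ε with hk
  refine ⟨contDiff_const.mul hu, hv.add (contDiff_const.mul hu), ?_, ?_⟩
  · intro q
    have hF : (fun q => a * ((k * u q) ^ 1 + (v q + (1 - k) * u q) ^ 1) * (k * u q)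
          + 0 * (k * u q * (v q + (1 - k) * u q)) ^ 1 * (v q + (1 - k) * u q))
        = fun q => k * (a * ((u q) ^ 1 + (v q) ^ 1) * u q
          + 0 * (u q * v q) ^ 1 * v q) := by
      funext q; ring
    rw [hF, pderivX_const_mul, pderivX_const_mul u k, pderivX_const_mul, pderivX_const_mul,
      pderivT_const_mul]
    have := equ q
    linear_combination k * this
  · intro q
    have hF : (fun q => a * ((k * u q) ^ 1 + (v q + (1 - k) * u q) ^ 1) * (v q + (1 - k) * u q)
          + 0 * (k * u q * (v q + (1 - k) * u q)) ^ 1 * (k * u q))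
        = fun q => (a * ((u q) ^ 1 + (v q) ^ 1) * v q + 0 * (u q * v q) ^ 1 * u q)
          + (1 - k) * (a * ((u q) ^ 1 + (v q) ^ 1) * u q + 0 * (u q * v q) ^ 1 * v q) := by
      funext q; ring
    have hGv : ContDiff ℝ (⊤ : ℕ∞) (fun q => a * ((u q) ^ 1 + (v q) ^ 1) * v q
        + 0 * (u q * v q) ^ 1 * u q) := by
      apply ContDiff.add
      · exact (contDiff_const.mul ((hu.pow 1).add (hv.pow 1))).mul hv
      · exact (contDiff_const.mul ((hu.mul hv).pow 1)).mul hu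
    have hGu : ContDiff ℝ (⊤ : ℕ∞) (fun q => a * ((u q) ^ 1 + (v q) ^ 1) * u q
        + 0 * (u q * v q) ^ 1 * v q) := by
      apply ContDiff.add
      · exact (contDiff_const.mul ((hu.pow 1).add (hv.pow 1))).mul hu
      · exact (contDiff_const.mul ((hu.mul hv).pow 1)).mul hv
    rw [hF, pderivX_add_smul _ _ hGv hGu]
    have h1 : pderivX (fun q => v q + (1 - k) * u q)
        = fun q => pderivX v q + (1 - k) * pderivX u q :=
      pderivX_add_smul v u hv hu (1 - k)
    have h2 : pderivX (pderivX (fun q => v q + (1 - k) * u q))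
        = fun q => pderivX (pderivX v) q + (1 - k) * pderivX (pderivX u) q := by
      rw [h1]
      exact pderivX_add_smul _ _ (contDiff_pderivX_s5 v hv) (contDiff_pderivX_s5 u hu) (1 - k)
    have h3 : pderivX (pderivX (pderivX (fun q => v q + (1 - k) * u q)))
        = fun q => pderivX (pderivX (pderivX v)) q
          + (1 - k) * pderivX (pderivX (pderivX u)) q := by
      rw [h2]
      exact pderivX_add_smul _ _ (contDiff_pderivX_s5 _ (contDiff_pderivX_s5 v hv))
        (contDiff_pderivX_s5 _ (contDiff_pderivX_s5 u hu)) (1 - k)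
    have hT : pderivT (fun q => v q + (1 - k) * u q)
        = fun q => pderivT v q + (1 - k) * pderivT u q := by
      rw [pderivT_add v (fun q => (1 - k) * u q) hv (contDiff_const.mul hu),
        pderivT_const_mul]
    rw [h3, hT]
    have h4 := equ q
    have h5 := eqv q
    linear_combination h5 + (1 - k) * h4
end

section
/- Suppose a = 0. If (u, v) is a smooth solution of the Gardner-type system, then for any real constants c₃, c₄, c₅ the substitution φ = c₃ u + c₄, ψ = c₃ v + c₅ solves the adjoint system, i.e., φ_t + f_u φ_x + g_u ψ_x + c φ_{xxx} = 0 and ψ_t + f_v φ_x + g_v ψ_x + c ψ_{xxx} = 0 hold identically in (t, x). In particular the system is strictly self-adjoint for a = 0. -/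
/-- `f(u,v) = a(u^p + v^p)u + b(uv)^p v`. -/
noncomputable def fGardner (a b : ℝ) (p : ℕ) (x y : ℝ) : ℝ :=
  a * (x ^ p + y ^ p) * x + b * (x * y) ^ p * y

/-- `g(u,v) = a(u^p + v^p)v + b(uv)^p u`. -/
noncomputable def gGardner (a b : ℝ) (p : ℕ) (x y : ℝ) : ℝ :=
  a * (x ^ p + y ^ p) * y + b * (x * y) ^ p * x

/-- `f_u`, the partial derivative of `f` in its first argument. -/
noncomputable def fGu (a b : ℝ) (p : ℕ) (x y : ℝ) : ℝ :=
  deriv (fun w => fGardner a b p w y) x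

/-- `f_v`, the partial derivative of `f` in its second argument. -/
noncomputable def fGv (a b : ℝ) (p : ℕ) (x y : ℝ) : ℝ :=
  deriv (fun w => fGardner a b p x w) y

/-- `g_u`, the partial derivative of `g` in its first argument. -/
noncomputable def gGu (a b : ℝ) (p : ℕ) (x y : ℝ) : ℝ :=
  deriv (fun w => gGardner a b p w y) x

/-- `g_v`, the partial derivative of `g` in its second argument. -/
noncomputable def gGv (a b : ℝ) (p : ℕ) (x y : ℝ) : ℝ :=
  deriv (fun w => gGardner a b p x w) y

/-- `(φ, ψ)` solves the adjoint system of the Gardner-type system along the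
solution `(u, v)`:
`φ_t + f_u φ_x + g_u ψ_x + c φ_{xxx} = 0`, `ψ_t + f_v φ_x + g_v ψ_x + c ψ_{xxx} = 0`,
with `f_u, f_v, g_u, g_v` evaluated at `(u(t,x), v(t,x))`. -/
def SolvesAdjoint (a b c : ℝ) (p : ℕ) (u v φ ψ : ℝ × ℝ → ℝ) : Prop :=
  (∀ q : ℝ × ℝ,
    pderivT φ q + fGu a b p (u q) (v q) * pderivX φ q
      + gGu a b p (u q) (v q) * pderivX ψ q
      + c * pderivX (pderivX (pderivX φ)) q = 0) ∧
  (∀ q : ℝ × ℝ,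
    pderivT ψ q + fGv a b p (u q) (v q) * pderivX φ q
      + gGv a b p (u q) (v q) * pderivX ψ q
      + c * pderivX (pderivX (pderivX ψ)) q = 0)

lemma aux_pderivX_slice (u : ℝ × ℝ → ℝ) (hu : ContDiff ℝ (⊤ : ℕ∞) u) (q : ℝ × ℝ) :
    HasDerivAt (fun y => u (q.1, y)) (pderivX u q) q.2 := by
  have hd : Differentiable ℝ (fun y => u (q.1, y)) :=
    (hu.differentiable (by simp)).comp ((differentiable_const _).prodMk differentiable_id)
  exact (hd q.2).hasDerivAt

lemma aux_pderivT_slice (u : ℝ × ℝ → ℝ) (hu : ContDiff ℝ (⊤ : ℕ∞) u) (q : ℝ × ℝ) :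
    HasDerivAt (fun s => u (s, q.2)) (pderivT u q) q.1 := by
  have hd : Differentiable ℝ (fun s => u (s, q.2)) :=
    (hu.differentiable (by simp)).comp (differentiable_id.prodMk (differentiable_const _))
  exact (hd q.1).hasDerivAt

lemma aux_pderivX_affine (u : ℝ × ℝ → ℝ) (hu : ContDiff ℝ (⊤ : ℕ∞) u) (c₃ c₄ : ℝ) (q : ℝ × ℝ) :
    pderivX (fun q => c₃ * u q + c₄) q = c₃ * pderivX u q := by
  have h := ((aux_pderivX_slice u hu q).const_mul c₃).add_const c₄
  exact h.deriv

lemma aux_pderivT_affine (u : ℝ × ℝ → ℝ) (hu : ContDiff ℝ (⊤ : ℕ∞) u) (c₃ c₄ : ℝ) (q : ℝ × ℝ) :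
    pderivT (fun q => c₃ * u q + c₄) q = c₃ * pderivT u q := by
  have h := ((aux_pderivT_slice u hu q).const_mul c₃).add_const c₄
  exact h.deriv

lemma aux_pderivX_eq (u : ℝ × ℝ → ℝ) (hu : ContDiff ℝ (⊤ : ℕ∞) u) :
    pderivX u = fun q => fderiv ℝ u q (0, 1) := by
  funext q
  have hcurve : HasDerivAt (fun y => ((q.1, y) : ℝ × ℝ)) ((0 : ℝ), (1 : ℝ)) q.2 :=
    (hasDerivAt_const q.2 q.1).prodMk (hasDerivAt_id q.2)
  have h := ((hu.differentiable (by simp) (q.1, q.2)).hasFDerivAt).comp_hasDerivAt q.2 hcurve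
  exact h.deriv

lemma aux_contDiff_pderivX (u : ℝ × ℝ → ℝ) (hu : ContDiff ℝ (⊤ : ℕ∞) u) :
    ContDiff ℝ (⊤ : ℕ∞) (pderivX u) := by
  rw [aux_pderivX_eq u hu]
  exact (hu.fderiv_right (by simp)).clm_apply contDiff_const

lemma aux_pderivX3_affine (u : ℝ × ℝ → ℝ) (hu : ContDiff ℝ (⊤ : ℕ∞) u) (c₃ c₄ : ℝ) (q : ℝ × ℝ) :
    pderivX (pderivX (pderivX (fun q => c₃ * u q + c₄))) q
      = c₃ * pderivX (pderivX (pderivX u)) q := by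
  have h1 : pderivX (fun q => c₃ * u q + c₄) = fun q => c₃ * pderivX u q + 0 := by
    funext q; rw [aux_pderivX_affine u hu c₃ c₄ q]; ring
  rw [h1]
  have h2 : pderivX (fun q => c₃ * pderivX u q + 0)
      = fun q => c₃ * pderivX (pderivX u) q + 0 := by
    funext q; rw [aux_pderivX_affine _ (aux_contDiff_pderivX u hu) c₃ 0 q]; ring
  rw [h2, aux_pderivX_affine _ (aux_contDiff_pderivX _ (aux_contDiff_pderivX u hu)) c₃ 0 q]

lemma fGu_eq (b : ℝ) (k : ℕ) (x y : ℝ) :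
    fGu 0 b (k + 1) x y = b * (((k : ℝ) + 1) * (x * y) ^ k * (1 * y)) * y := by
  unfold fGu fGardner
  have h0 : (fun w : ℝ => 0 * (w ^ (k + 1) + y ^ (k + 1)) * w + b * (w * y) ^ (k + 1) * y)
      = fun w => b * (w * y) ^ (k + 1) * y := by funext w; ring
  rw [h0]
  have h1 : HasDerivAt (fun w : ℝ => w * y) (1 * y) x := (hasDerivAt_id x).mul_const y
  have h := ((h1.pow (k + 1)).const_mul b).mul_const y
  simp only [Nat.add_sub_cancel, Nat.cast_add, Nat.cast_one] at h
  exact h.deriv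

lemma gGu_eq (b : ℝ) (k : ℕ) (x y : ℝ) :
    gGu 0 b (k + 1) x y
      = b * (((k : ℝ) + 1) * (x * y) ^ k * (1 * y)) * x + b * (x * y) ^ (k + 1) * 1 := by
  unfold gGu gGardner
  have h0 : (fun w : ℝ => 0 * (w ^ (k + 1) + y ^ (k + 1)) * y + b * (w * y) ^ (k + 1) * w)
      = fun w => b * (w * y) ^ (k + 1) * w := by funext w; ring
  rw [h0]
  have h1 : HasDerivAt (fun w : ℝ => w * y) (1 * y) x := (hasDerivAt_id x).mul_const y
  have h := ((h1.pow (k + 1)).const_mul b).mul (hasDerivAt_id x)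
  simp only [Nat.add_sub_cancel, Nat.cast_add, Nat.cast_one] at h
  exact h.deriv

lemma fGv_eq (b : ℝ) (k : ℕ) (x y : ℝ) :
    fGv 0 b (k + 1) x y
      = b * (((k : ℝ) + 1) * (x * y) ^ k * (x * 1)) * y + b * (x * y) ^ (k + 1) * 1 := by
  unfold fGv fGardner
  have h0 : (fun w : ℝ => 0 * (x ^ (k + 1) + w ^ (k + 1)) * x + b * (x * w) ^ (k + 1) * w)
      = fun w => b * (x * w) ^ (k + 1) * w := by funext w; ring
  rw [h0]
  have h1 : HasDerivAt (fun w : ℝ => x * w) (x * 1) y := (hasDerivAt_id y).const_mul x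
  have h := ((h1.pow (k + 1)).const_mul b).mul (hasDerivAt_id y)
  simp only [Nat.add_sub_cancel, Nat.cast_add, Nat.cast_one] at h
  exact h.deriv

lemma gGv_eq (b : ℝ) (k : ℕ) (x y : ℝ) :
    gGv 0 b (k + 1) x y = b * (((k : ℝ) + 1) * (x * y) ^ k * (x * 1)) * x := by
  unfold gGv gGardner
  have h0 : (fun w : ℝ => 0 * (x ^ (k + 1) + w ^ (k + 1)) * w + b * (x * w) ^ (k + 1) * x)
      = fun w => b * (x * w) ^ (k + 1) * x := by funext w; ring
  rw [h0]
  have h1 : HasDerivAt (fun w : ℝ => x * w) (x * 1) y := (hasDerivAt_id y).const_mul x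
  have h := ((h1.pow (k + 1)).const_mul b).mul_const x
  simp only [Nat.add_sub_cancel, Nat.cast_add, Nat.cast_one] at h
  exact h.deriv

lemma aux_chain (u v w : ℝ × ℝ → ℝ) (hu : ContDiff ℝ (⊤ : ℕ∞) u) (hv : ContDiff ℝ (⊤ : ℕ∞) v)
    (hw : ContDiff ℝ (⊤ : ℕ∞) w) (b : ℝ) (k : ℕ) (q : ℝ × ℝ) :
    pderivX (fun q => b * (u q * v q) ^ (k + 1) * w q) q
      = b * (((k : ℝ) + 1) * (u q * v q) ^ k
            * (pderivX u q * v q + u q * pderivX v q)) * w q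
        + b * (u q * v q) ^ (k + 1) * pderivX w q := by
  have hU := aux_pderivX_slice u hu q
  have hV := aux_pderivX_slice v hv q
  have hW := aux_pderivX_slice w hw q
  have h := (((hU.mul hV).pow (k + 1)).const_mul b).mul hW
  simp only [Nat.add_sub_cancel, Nat.cast_add, Nat.cast_one] at h
  exact h.deriv

/-- Self-adjointness for `a = 0`: if `(u, v)` solves the Gardner-type system, then
`φ = c₃ u + c₄`, `ψ = c₃ v + c₅` solves the adjoint system. -/
theorem stmt_7 (a b c : ℝ) (p : ℕ) (hp : 1 ≤ p) (ha : a = 0) (u v : ℝ × ℝ → ℝ)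
    (huv : IsGardnerSolution a b c p u v) (c₃ c₄ c₅ : ℝ) :
    SolvesAdjoint a b c p u v
      (fun q => c₃ * u q + c₄)
      (fun q => c₃ * v q + c₅) := by
  subst ha
  obtain ⟨k, rfl⟩ : ∃ k, p = k + 1 := ⟨p - 1, (Nat.succ_pred_eq_of_pos hp).symm⟩
  obtain ⟨hu, hv, heu, hev⟩ := huv
  constructor
  · intro q
    have h1 := heu q
    have h0 : (fun q => 0 * ((u q) ^ (k + 1) + (v q) ^ (k + 1)) * u q
        + b * (u q * v q) ^ (k + 1) * v q)
        = fun q => b * (u q * v q) ^ (k + 1) * v q := by funext q; ring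
    rw [h0, aux_chain u v v hu hv hv b k q] at h1
    rw [aux_pderivT_affine u hu c₃ c₄ q, aux_pderivX_affine u hu c₃ c₄ q,
      aux_pderivX_affine v hv c₃ c₅ q, aux_pderivX3_affine u hu c₃ c₄ q,
      fGu_eq, gGu_eq]
    linear_combination c₃ * h1
  · intro q
    have h1 := hev q
    have h0 : (fun q => 0 * ((u q) ^ (k + 1) + (v q) ^ (k + 1)) * v q
        + b * (u q * v q) ^ (k + 1) * u q)
        = fun q => b * (u q * v q) ^ (k + 1) * u q := by funext q; ring
    rw [h0, aux_chain u v u hu hv hu b k q] at h1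
    rw [aux_pderivT_affine v hv c₃ c₅ q, aux_pderivX_affine u hu c₃ c₄ q,
      aux_pderivX_affine v hv c₃ c₅ q, aux_pderivX3_affine v hv c₃ c₅ q,
      fGv_eq, gGv_eq]
    linear_combination c₃ * h1
end

section
/- Let r, s : ℝ² → ℝ be smooth functions satisfying ∂r/∂v = ∂s/∂u everywhere, and let c be a real constant. Then the system u_t + (r(u,v))_x + c u_{xxx} = 0, v_t + (s(u,v))_x + c v_{xxx} = 0 is strictly self-adjoint: if (u, v) is a smooth solution of this system, then the substitution ū = u, v̄ = v solves the adjoint system ū_t + r_u ū_x + s_u v̄_x + c ū_{xxx} = 0, v̄_t + r_v ū_x + s_v v̄_x + c v̄_{xxx} = 0 (with r_u, r_v, s_u, s_v evaluated at (u(t,x), v(t,x))). -/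
lemma pT_eq (r : ℝ × ℝ → ℝ) (hr : DifferentiableAt ℝ r z) :
    pderivT r z = fderiv ℝ r z (1, 0) := by
  have h1 : HasDerivAt (fun s : ℝ => (s, z.2)) ((1 : ℝ), (0 : ℝ)) z.1 :=
    (hasDerivAt_id z.1).prodMk (hasDerivAt_const _ _)
  have := hr.hasFDerivAt.comp_hasDerivAt z.1 h1
  simpa [pderivT, Function.comp_def] using this.deriv

lemma pX_eq (r : ℝ × ℝ → ℝ) (hr : DifferentiableAt ℝ r z) :
    pderivX r z = fderiv ℝ r z (0, 1) := by
  have h1 : HasDerivAt (fun y : ℝ => (z.1, y)) ((0 : ℝ), (1 : ℝ)) z.2 :=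
    (hasDerivAt_const _ _).prodMk (hasDerivAt_id z.2)
  have := hr.hasFDerivAt.comp_hasDerivAt z.2 h1
  simpa [pderivX, Function.comp_def] using this.deriv

lemma chainX (r : ℝ × ℝ → ℝ) (hr : ContDiff ℝ (⊤ : ℕ∞) r)
    (u v : ℝ × ℝ → ℝ) (hu : ContDiff ℝ (⊤ : ℕ∞) u) (hv : ContDiff ℝ (⊤ : ℕ∞) v) (q : ℝ × ℝ) :
    pderivX (fun q => r (u q, v q)) q
      = pderivT r (u q, v q) * pderivX u q + pderivX r (u q, v q) * pderivX v q := by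
  obtain ⟨t, x⟩ := q
  have hline : ∀ w : ℝ × ℝ → ℝ, ContDiff ℝ (⊤ : ℕ∞) w →
      HasDerivAt (fun y => w (t, y)) (pderivX w (t, x)) x := by
    intro w hw
    have h1 : HasDerivAt (fun y : ℝ => (t, y)) ((0 : ℝ), (1 : ℝ)) x :=
      (hasDerivAt_const _ _).prodMk (hasDerivAt_id x)
    have hwd : DifferentiableAt ℝ w (t, x) := (hw.differentiable (by simp)).differentiableAt
    have hd := hwd.hasFDerivAt.comp_hasDerivAt x h1
    rw [pX_eq w hwd]
    exact hd
  have hu' := hline u hu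
  have hv' := hline v hv
  have hφ : HasDerivAt (fun y => (u (t, y), v (t, y)))
      (pderivX u (t, x), pderivX v (t, x)) x := hu'.prodMk hv'
  have hrd : DifferentiableAt ℝ r (u (t, x), v (t, x)) :=
    (hr.differentiable (by simp)).differentiableAt
  have hc := hrd.hasFDerivAt.comp_hasDerivAt x hφ
  have hd : pderivX (fun q => r (u q, v q)) (t, x)
      = fderiv ℝ r (u (t, x), v (t, x)) (pderivX u (t, x), pderivX v (t, x)) := by
    simpa [pderivX, Function.comp_def] using hc.deriv
  rw [hd, pT_eq r hrd, pX_eq r hrd]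
  have : (pderivX u (t, x), pderivX v (t, x))
      = pderivX u (t, x) • ((1 : ℝ), (0 : ℝ)) + pderivX v (t, x) • ((0 : ℝ), (1 : ℝ)) := by
    simp [Prod.ext_iff]
  rw [this, map_add, map_smul, map_smul]
  simp [mul_comm]


/-- Any system `u_t + (r(u,v))_x + c u_{xxx} = 0`, `v_t + (s(u,v))_x + c v_{xxx} = 0`
with `r_v = s_u` everywhere is strictly self-adjoint: for a smooth solution `(u, v)`,
the substitution `ū = u`, `v̄ = v` solves the adjoint system
`ū_t + r_u ū_x + s_u v̄_x + c ū_{xxx} = 0`, `v̄_t + r_v ū_x + s_v v̄_x + c v̄_{xxx} = 0`.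
(Here `pderivT`/`pderivX` applied to `r, s : ℝ × ℝ → ℝ` are the partial derivatives
in the first and second argument, respectively.) -/
theorem stmt_10 (r s : ℝ × ℝ → ℝ) (hr : ContDiff ℝ (⊤ : ℕ∞) r) (hs : ContDiff ℝ (⊤ : ℕ∞) s)
    (hrs : ∀ z : ℝ × ℝ, pderivX r z = pderivT s z) (c : ℝ)
    (u v : ℝ × ℝ → ℝ) (hu : ContDiff ℝ (⊤ : ℕ∞) u) (hv : ContDiff ℝ (⊤ : ℕ∞) v)
    (heq1 : ∀ q : ℝ × ℝ,
      pderivT u q + pderivX (fun q => r (u q, v q)) q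
        + c * pderivX (pderivX (pderivX u)) q = 0)
    (heq2 : ∀ q : ℝ × ℝ,
      pderivT v q + pderivX (fun q => s (u q, v q)) q
        + c * pderivX (pderivX (pderivX v)) q = 0) :
    (∀ q : ℝ × ℝ,
      pderivT u q + pderivT r (u q, v q) * pderivX u q
        + pderivT s (u q, v q) * pderivX v q
        + c * pderivX (pderivX (pderivX u)) q = 0) ∧
    (∀ q : ℝ × ℝ,
      pderivT v q + pderivX r (u q, v q) * pderivX u q
        + pderivX s (u q, v q) * pderivX v q
        + c * pderivX (pderivX (pderivX v)) q = 0) := by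
  constructor
  · intro q
    have h := heq1 q
    rw [chainX r hr u v hu hv q, hrs (u q, v q)] at h
    linarith
  · intro q
    have h := heq2 q
    rw [chainX s hs u v hu hv q, ← hrs (u q, v q)] at h
    linarith
end

section
/- Suppose a = 0. Every smooth solution (u, v) of the Gardner-type system satisfies the conservation law ∂_t[(p+1)(u² + v²)] + ∂_x[2b(2p+1)(uv)^{p+1} + c(p+1)(∂_x²(u² + v²) − 3(u_x² + v_x²))] = 0 identically in (t, x). -/
open scoped ContDiff

/-- Conservation law for `a = 0`:
`∂_t[(p+1)(u² + v²)] + ∂_x[2b(2p+1)(uv)^{p+1} + c(p+1)(∂_x²(u² + v²) - 3(u_x² + v_x²))] = 0`. -/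
theorem stmt_11 (a b c : ℝ) (p : ℕ) (hp : 1 ≤ p) (ha : a = 0) (u v : ℝ × ℝ → ℝ)
    (huv : IsGardnerSolution a b c p u v) :
    ∀ q : ℝ × ℝ,
      pderivT (fun q => ((p : ℝ) + 1) * ((u q) ^ 2 + (v q) ^ 2)) q
        + pderivX (fun q =>
            2 * b * (2 * (p : ℝ) + 1) * (u q * v q) ^ (p + 1)
              + c * ((p : ℝ) + 1) *
                (pderivX (pderivX (fun q => (u q) ^ 2 + (v q) ^ 2)) q
                  - 3 * ((pderivX u q) ^ 2 + (pderivX v q) ^ 2))) q = 0 := by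
  obtain ⟨hu, hv, heq1, heq2⟩ := huv
  subst ha
  obtain ⟨m, rfl⟩ : ∃ m, p = m + 1 := ⟨p - 1, (Nat.succ_pred_eq_of_pos hp).symm⟩
  have hu' : ContDiff ℝ ∞ u := hu.of_le (by simp)
  have hv' : ContDiff ℝ ∞ v := hv.of_le (by simp)
  rintro ⟨t, x⟩
  set f : ℝ → ℝ := fun y => u (t, y) with hfdef
  set g : ℝ → ℝ := fun y => v (t, y) with hgdef
  have hcf : ContDiff ℝ ∞ f := hu'.comp (contDiff_const.prodMk contDiff_id)
  have hcg : ContDiff ℝ ∞ g := hv'.comp (contDiff_const.prodMk contDiff_id)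
  have hcf1 : ContDiff ℝ ∞ (deriv f) := (contDiff_infty_iff_deriv.mp hcf).2
  have hcf2 : ContDiff ℝ ∞ (deriv (deriv f)) := (contDiff_infty_iff_deriv.mp hcf1).2
  have hcg1 : ContDiff ℝ ∞ (deriv g) := (contDiff_infty_iff_deriv.mp hcg).2
  have hcg2 : ContDiff ℝ ∞ (deriv (deriv g)) := (contDiff_infty_iff_deriv.mp hcg1).2
  have hle : (∞ : WithTop ℕ∞) ≠ 0 := by simp
  have Hf : ∀ y, HasDerivAt f (deriv f y) y :=
    fun y => ((hcf.differentiable hle) y).hasDerivAt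
  have Hg : ∀ y, HasDerivAt g (deriv g y) y :=
    fun y => ((hcg.differentiable hle) y).hasDerivAt
  have Hf1 : ∀ y, HasDerivAt (deriv f) (deriv (deriv f) y) y :=
    fun y => ((hcf1.differentiable hle) y).hasDerivAt
  have Hg1 : ∀ y, HasDerivAt (deriv g) (deriv (deriv g) y) y :=
    fun y => ((hcg1.differentiable hle) y).hasDerivAt
  have Hf2 : ∀ y, HasDerivAt (deriv (deriv f)) (deriv (deriv (deriv f)) y) y :=
    fun y => ((hcf2.differentiable hle) y).hasDerivAt
  have Hg2 : ∀ y, HasDerivAt (deriv (deriv g)) (deriv (deriv (deriv g)) y) y :=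
    fun y => ((hcg2.differentiable hle) y).hasDerivAt
  -- time derivatives
  have HuT : HasDerivAt (fun s => u (s, x)) (pderivT u (t, x)) t := by
    have : DifferentiableAt ℝ (fun s => u (s, x)) t :=
      ((hu'.comp (contDiff_id.prodMk contDiff_const)).differentiable hle) t
    exact this.hasDerivAt
  have HvT : HasDerivAt (fun s => v (s, x)) (pderivT v (t, x)) t := by
    have : DifferentiableAt ℝ (fun s => v (s, x)) t :=
      ((hv'.comp (contDiff_id.prodMk contDiff_const)).differentiable hle) t
    exact this.hasDerivAt
  -- the h function
  set h : ℝ → ℝ := fun z => f z ^ 2 + g z ^ 2 with hhdef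
  have hch : ContDiff ℝ ∞ h := (hcf.pow 2).add (hcg.pow 2)
  have hch1 : ContDiff ℝ ∞ (deriv h) := (contDiff_infty_iff_deriv.mp hch).2
  have hch2 : ContDiff ℝ ∞ (deriv (deriv h)) := (contDiff_infty_iff_deriv.mp hch1).2
  have Hh2 : HasDerivAt (deriv (deriv h)) (deriv (deriv (deriv h)) x) x :=
    ((hch2.differentiable hle) x).hasDerivAt
  -- first spatial derivative of h
  have hh1 : deriv h = fun y => 2 * (f y * deriv f y) + 2 * (g y * deriv g y) := by
    funext y
    have hd := (((Hf y).pow 2).add ((Hg y).pow 2)).deriv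
    erw [hd]; push_cast; ring
  have hh2 : deriv (deriv h) = fun y =>
      2 * (deriv f y * deriv f y + f y * deriv (deriv f) y)
        + 2 * (deriv g y * deriv g y + g y * deriv (deriv g) y) := by
    funext y
    rw [hh1]
    exact ((((Hf y).mul (Hf1 y)).const_mul 2).add (((Hg y).mul (Hg1 y)).const_mul 2)).deriv
  have hh3 : deriv (deriv (deriv h)) x =
      2 * ((deriv (deriv f) x * deriv f x + deriv f x * deriv (deriv f) x)
            + (deriv f x * deriv (deriv f) x + f x * deriv (deriv (deriv f)) x))
        + 2 * ((deriv (deriv g) x * deriv g x + deriv g x * deriv (deriv g) x)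
            + (deriv g x * deriv (deriv g) x + g x * deriv (deriv (deriv g)) x)) := by
    rw [hh2]
    exact (((((Hf1 x).mul (Hf1 x)).add ((Hf x).mul (Hf2 x))).const_mul 2).add
      ((((Hg1 x).mul (Hg1 x)).add ((Hg x).mul (Hg2 x))).const_mul 2)).deriv
  -- the PDE at (t, x)
  have H1 := heq1 (t, x)
  have H2 := heq2 (t, x)
  simp only [zero_mul, zero_add] at H1 H2
  have eb1 : pderivX (fun q => b * (u q * v q) ^ (m + 1) * v q) (t, x)
      = deriv (fun y => b * (f y * g y) ^ (m + 1) * g y) x := rfl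
  have eb2 : pderivX (fun q => b * (u q * v q) ^ (m + 1) * u q) (t, x)
      = deriv (fun y => b * (f y * g y) ^ (m + 1) * f y) x := rfl
  have e3u : pderivX (pderivX (pderivX u)) (t, x) = deriv (deriv (deriv f)) x := rfl
  have e3v : pderivX (pderivX (pderivX v)) (t, x) = deriv (deriv (deriv g)) x := rfl
  rw [eb1, e3u] at H1
  rw [eb2, e3v] at H2
  have HJ1 := ((((Hf x).mul (Hg x)).pow (m + 1)).const_mul b).mul (Hg x)
  have HJ2 := ((((Hf x).mul (Hg x)).pow (m + 1)).const_mul b).mul (Hf x)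
  erw [HJ1.deriv] at H1
  erw [HJ2.deriv] at H2
  simp only [Pi.mul_apply, Pi.pow_apply] at H1 H2
  -- the goal, in one-variable form
  show deriv (fun s => ((↑(m + 1) : ℝ) + 1) * (u (s, x) ^ 2 + v (s, x) ^ 2)) t
      + deriv (fun y => 2 * b * (2 * (↑(m + 1) : ℝ) + 1) * (f y * g y) ^ (m + 1 + 1)
          + c * ((↑(m + 1) : ℝ) + 1) *
            (deriv (deriv h) y - 3 * ((deriv f y) ^ 2 + (deriv g y) ^ 2))) x = 0
  have HT := ((HuT.pow 2).add (HvT.pow 2)).const_mul ((↑(m + 1) : ℝ) + 1)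
  erw [HT.deriv]
  have HD := ((((Hf x).mul (Hg x)).pow (m + 1 + 1)).const_mul
      (2 * b * (2 * (↑(m + 1) : ℝ) + 1))).add
    ((Hh2.sub ((((Hf1 x).pow 2).add ((Hg1 x).pow 2)).const_mul 3)).const_mul
      (c * ((↑(m + 1) : ℝ) + 1)))
  erw [HD.deriv, hh3]
  have PTu : pderivT u (t, x) = -(b * (↑(m + 1) * (f x * g x) ^ (m + 1 - 1) *
      (deriv f x * g x + f x * deriv g x)) * g x + b * (f x * g x) ^ (m + 1) * deriv g x
      + c * deriv (deriv (deriv f)) x) := by linarith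
  have PTv : pderivT v (t, x) = -(b * (↑(m + 1) * (f x * g x) ^ (m + 1 - 1) *
      (deriv f x * g x + f x * deriv g x)) * f x + b * (f x * g x) ^ (m + 1) * deriv f x
      + c * deriv (deriv (deriv g)) x) := by linarith
  rw [PTu, PTv]
  simp only [hfdef, hgdef, Nat.add_sub_cancel, Pi.mul_apply, Pi.pow_apply]
  push_cast
  ring
end

section
/- Suppose b = 0 and p = 2, so the system reads u_t + a((u² + v²)u)_x + c u_{xxx} = 0, v_t + a((u² + v²)v)_x + c v_{xxx} = 0. Every smooth solution (u, v) satisfies the conservation law ∂_t[2(u² + v²)] + ∂_x[3a(u² + v²)² + 2c(∂_x²(u² + v²) − 3(u_x² + v_x²))] = 0 identically in (t, x). -/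
open scoped ContDiff

private theorem HasDerivAt.change {f : ℝ → ℝ} {a x : ℝ} (h : HasDerivAt f a x) {b : ℝ}
    (hab : a = b) : HasDerivAt f b x := hab ▸ h

/-- Conservation law for `b = 0`, `p = 2`:
`∂_t[2(u² + v²)] + ∂_x[3a(u² + v²)² + 2c(∂_x²(u² + v²) - 3(u_x² + v_x²))] = 0`. -/
theorem stmt_13 (a b c : ℝ) (p : ℕ) (hb : b = 0) (hp : p = 2) (u v : ℝ × ℝ → ℝ)
    (huv : IsGardnerSolution a b c p u v) :
    ∀ q : ℝ × ℝ,
      pderivT (fun q => 2 * ((u q) ^ 2 + (v q) ^ 2)) q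
        + pderivX (fun q =>
            3 * a * ((u q) ^ 2 + (v q) ^ 2) ^ 2
              + 2 * c * (pderivX (pderivX (fun q => (u q) ^ 2 + (v q) ^ 2)) q
                  - 3 * ((pderivX u q) ^ 2 + (pderivX v q) ^ 2))) q = 0 := by
  subst hb hp
  obtain ⟨hu0, hv0, hequ, heqv⟩ := huv
  have hu : ContDiff ℝ ∞ u := hu0.of_le (by simp)
  have hv : ContDiff ℝ ∞ v := hv0.of_le (by simp)
  have hle : (∞ : WithTop ℕ∞) ≠ 0 := by simp
  rintro ⟨t, x⟩
  -- smoothness of the spatial slices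
  have hUc : ContDiff ℝ ∞ (fun y : ℝ => u (t, y)) := hu.comp (contDiff_const.prodMk contDiff_id)
  have hVc : ContDiff ℝ ∞ (fun y : ℝ => v (t, y)) := hv.comp (contDiff_const.prodMk contDiff_id)
  have hU1c : ContDiff ℝ ∞ (deriv (fun y : ℝ => u (t, y))) := (contDiff_infty_iff_deriv.mp hUc).2
  have hV1c : ContDiff ℝ ∞ (deriv (fun y : ℝ => v (t, y))) := (contDiff_infty_iff_deriv.mp hVc).2
  have hU2c : ContDiff ℝ ∞ (deriv (deriv (fun y : ℝ => u (t, y)))) :=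
    (contDiff_infty_iff_deriv.mp hU1c).2
  have hV2c : ContDiff ℝ ∞ (deriv (deriv (fun y : ℝ => v (t, y)))) :=
    (contDiff_infty_iff_deriv.mp hV1c).2
  have dU : ∀ y : ℝ, HasDerivAt (fun z : ℝ => u (t, z)) (deriv (fun z : ℝ => u (t, z)) y) y :=
    fun y => (hUc.differentiable hle y).hasDerivAt
  have dV : ∀ y : ℝ, HasDerivAt (fun z : ℝ => v (t, z)) (deriv (fun z : ℝ => v (t, z)) y) y :=
    fun y => (hVc.differentiable hle y).hasDerivAt
  have dU1 : ∀ y : ℝ, HasDerivAt (deriv (fun z : ℝ => u (t, z)))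
      (deriv (deriv (fun z : ℝ => u (t, z))) y) y :=
    fun y => (hU1c.differentiable hle y).hasDerivAt
  have dV1 : ∀ y : ℝ, HasDerivAt (deriv (fun z : ℝ => v (t, z)))
      (deriv (deriv (fun z : ℝ => v (t, z))) y) y :=
    fun y => (hV1c.differentiable hle y).hasDerivAt
  have dU2 : ∀ y : ℝ, HasDerivAt (deriv (deriv (fun z : ℝ => u (t, z))))
      (deriv (deriv (deriv (fun z : ℝ => u (t, z)))) y) y :=
    fun y => (hU2c.differentiable hle y).hasDerivAt
  have dV2 : ∀ y : ℝ, HasDerivAt (deriv (deriv (fun z : ℝ => v (t, z))))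
      (deriv (deriv (deriv (fun z : ℝ => v (t, z)))) y) y :=
    fun y => (hV2c.differentiable hle y).hasDerivAt
  -- time-slice derivatives
  have dUt : HasDerivAt (fun s : ℝ => u (s, x)) (pderivT u (t, x)) t :=
    (((hu.comp (contDiff_id.prodMk contDiff_const)).differentiable hle) t).hasDerivAt
  have dVt : HasDerivAt (fun s : ℝ => v (s, x)) (pderivT v (t, x)) t :=
    (((hv.comp (contDiff_id.prodMk contDiff_const)).differentiable hle) t).hasDerivAt
  -- first spatial derivative of u^2 + v^2
  have hF1 : deriv (fun w : ℝ => u (t, w) ^ 2 + v (t, w) ^ 2)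
      = fun w : ℝ => 2 * (u (t, w) * deriv (fun z : ℝ => u (t, z)) w)
          + 2 * (v (t, w) * deriv (fun z : ℝ => v (t, z)) w) := by
    funext w
    exact (HasDerivAt.change (((dU w).pow 2).add ((dV w).pow 2))
      (by beta_reduce; push_cast; ring)).deriv
  -- second spatial derivative of u^2 + v^2
  have hF2 : deriv (deriv (fun w : ℝ => u (t, w) ^ 2 + v (t, w) ^ 2))
      = fun w : ℝ => 2 * deriv (fun z : ℝ => u (t, z)) w ^ 2
          + 2 * (u (t, w) * deriv (deriv (fun z : ℝ => u (t, z))) w)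
          + 2 * deriv (fun z : ℝ => v (t, z)) w ^ 2
          + 2 * (v (t, w) * deriv (deriv (fun z : ℝ => v (t, z))) w) := by
    rw [hF1]
    funext w
    exact (HasDerivAt.change ((((dU w).mul (dU1 w)).const_mul 2).add
      (((dV w).mul (dV1 w)).const_mul 2)) (by beta_reduce; push_cast; ring)).deriv
  -- time derivative of the density
  have hA' : pderivT (fun q => 2 * ((u q) ^ 2 + (v q) ^ 2)) (t, x)
      = 4 * u (t, x) * pderivT u (t, x) + 4 * v (t, x) * pderivT v (t, x) :=
    (HasDerivAt.change (((dUt.pow 2).add (dVt.pow 2)).const_mul 2)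
      (by beta_reduce; push_cast; ring) :
        HasDerivAt (fun s : ℝ => 2 * (u (s, x) ^ 2 + v (s, x) ^ 2)) _ t).deriv
  -- spatial derivative of the flux
  have hGc : HasDerivAt (fun y : ℝ =>
      3 * a * ((u (t, y) ^ 2 + v (t, y) ^ 2) ^ 2)
        + 2 * c * (2 * deriv (fun z : ℝ => u (t, z)) y ^ 2
            + 2 * (u (t, y) * deriv (deriv (fun z : ℝ => u (t, z))) y)
            + (2 * deriv (fun z : ℝ => v (t, z)) y ^ 2
              + 2 * (v (t, y) * deriv (deriv (fun z : ℝ => v (t, z))) y))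
            - 3 * (deriv (fun z : ℝ => u (t, z)) y ^ 2 + deriv (fun z : ℝ => v (t, z)) y ^ 2)))
      (12 * a * (u (t, x) ^ 2 + v (t, x) ^ 2)
          * (u (t, x) * deriv (fun z : ℝ => u (t, z)) x + v (t, x) * deriv (fun z : ℝ => v (t, z)) x)
        + 4 * c * (u (t, x) * deriv (deriv (deriv (fun z : ℝ => u (t, z)))) x
            + v (t, x) * deriv (deriv (deriv (fun z : ℝ => v (t, z)))) x)) x :=
    HasDerivAt.change
      ((((((dU x).pow 2).add ((dV x).pow 2)).pow 2).const_mul (3 * a)).add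
        (((((((dU1 x).pow 2).const_mul 2).add (((dU x).mul (dU2 x)).const_mul 2)).add
            ((((dV1 x).pow 2).const_mul 2).add (((dV x).mul (dV2 x)).const_mul 2))).sub
          ((((dU1 x).pow 2).add ((dV1 x).pow 2)).const_mul 3)).const_mul (2 * c)))
      (by beta_reduce; push_cast [Pi.pow_apply, Pi.add_apply, Pi.mul_apply, Pi.sub_apply]; ring)
  have hB' : pderivX (fun q =>
      3 * a * ((u q) ^ 2 + (v q) ^ 2) ^ 2
        + 2 * c * (pderivX (pderivX (fun q => (u q) ^ 2 + (v q) ^ 2)) q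
            - 3 * ((pderivX u q) ^ 2 + (pderivX v q) ^ 2))) (t, x)
      = 12 * a * (u (t, x) ^ 2 + v (t, x) ^ 2)
          * (u (t, x) * deriv (fun z : ℝ => u (t, z)) x + v (t, x) * deriv (fun z : ℝ => v (t, z)) x)
        + 4 * c * (u (t, x) * deriv (deriv (deriv (fun z : ℝ => u (t, z)))) x
            + v (t, x) * deriv (deriv (deriv (fun z : ℝ => v (t, z)))) x) := by
    have h2 : deriv (fun y : ℝ =>
        3 * a * (u (t, y) ^ 2 + v (t, y) ^ 2) ^ 2
          + 2 * c * (deriv (deriv (fun w : ℝ => u (t, w) ^ 2 + v (t, w) ^ 2)) y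
              - 3 * (deriv (fun z : ℝ => u (t, z)) y ^ 2 + deriv (fun z : ℝ => v (t, z)) y ^ 2))) x
        = 12 * a * (u (t, x) ^ 2 + v (t, x) ^ 2)
            * (u (t, x) * deriv (fun z : ℝ => u (t, z)) x
              + v (t, x) * deriv (fun z : ℝ => v (t, z)) x)
          + 4 * c * (u (t, x) * deriv (deriv (deriv (fun z : ℝ => u (t, z)))) x
              + v (t, x) * deriv (deriv (deriv (fun z : ℝ => v (t, z)))) x) := by
      rw [show (fun y : ℝ =>
          3 * a * (u (t, y) ^ 2 + v (t, y) ^ 2) ^ 2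
            + 2 * c * (deriv (deriv (fun w : ℝ => u (t, w) ^ 2 + v (t, w) ^ 2)) y
                - 3 * (deriv (fun z : ℝ => u (t, z)) y ^ 2 + deriv (fun z : ℝ => v (t, z)) y ^ 2)))
          = (fun y : ℝ =>
            3 * a * ((u (t, y) ^ 2 + v (t, y) ^ 2) ^ 2)
              + 2 * c * (2 * deriv (fun z : ℝ => u (t, z)) y ^ 2
                  + 2 * (u (t, y) * deriv (deriv (fun z : ℝ => u (t, z))) y)
                  + (2 * deriv (fun z : ℝ => v (t, z)) y ^ 2
                    + 2 * (v (t, y) * deriv (deriv (fun z : ℝ => v (t, z))) y))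
                  - 3 * (deriv (fun z : ℝ => u (t, z)) y ^ 2
                    + deriv (fun z : ℝ => v (t, z)) y ^ 2))) from by
        funext y; simp only [hF2]; ring]
      exact hGc.deriv
    exact h2
  -- the evolution equations at (t, x)
  have hequ' := hequ (t, x)
  have heqv' := heqv (t, x)
  simp only [zero_mul, add_zero] at hequ' heqv'
  have eAu : pderivX (fun q => a * ((u q) ^ 2 + (v q) ^ 2) * u q) (t, x)
      = a * (2 * (u (t, x) * deriv (fun z : ℝ => u (t, z)) x)
            + 2 * (v (t, x) * deriv (fun z : ℝ => v (t, z)) x)) * u (t, x)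
        + a * (u (t, x) ^ 2 + v (t, x) ^ 2) * deriv (fun z : ℝ => u (t, z)) x :=
    (HasDerivAt.change (((((dU x).pow 2).add ((dV x).pow 2)).const_mul a).mul (dU x))
      (by beta_reduce; push_cast [Pi.pow_apply, Pi.add_apply, Pi.mul_apply, Pi.sub_apply]; ring) :
        HasDerivAt (fun y : ℝ => a * (u (t, y) ^ 2 + v (t, y) ^ 2) * u (t, y)) _ x).deriv
  have eAv : pderivX (fun q => a * ((u q) ^ 2 + (v q) ^ 2) * v q) (t, x)
      = a * (2 * (u (t, x) * deriv (fun z : ℝ => u (t, z)) x)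
            + 2 * (v (t, x) * deriv (fun z : ℝ => v (t, z)) x)) * v (t, x)
        + a * (u (t, x) ^ 2 + v (t, x) ^ 2) * deriv (fun z : ℝ => v (t, z)) x :=
    (HasDerivAt.change (((((dU x).pow 2).add ((dV x).pow 2)).const_mul a).mul (dV x))
      (by beta_reduce; push_cast [Pi.pow_apply, Pi.add_apply, Pi.mul_apply, Pi.sub_apply]; ring) :
        HasDerivAt (fun y : ℝ => a * (u (t, y) ^ 2 + v (t, y) ^ 2) * v (t, y)) _ x).deriv
  have e3u : pderivX (pderivX (pderivX u)) (t, x)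
      = deriv (deriv (deriv (fun z : ℝ => u (t, z)))) x := rfl
  have e3v : pderivX (pderivX (pderivX v)) (t, x)
      = deriv (deriv (deriv (fun z : ℝ => v (t, z)))) x := rfl
  rw [eAu, e3u] at hequ'
  rw [eAv, e3v] at heqv'
  linear_combination hA' + hB' + 4 * u (t, x) * hequ' + 4 * v (t, x) * heqv'
end
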